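/- Temporal dynamical systems are timed: if (S,g) is a dynamical system with g injective, then (S,g) admits a timing map (i.e., (S,g) is timed). -/

import Mathlib

/-- A timing map on a dynamical system `(S, g)`: it assigns `0` to every initial state (a state
not in the range of `g`), and satisfies `τ(g(s)) = τ(s) + 1` (with `∞ + 1 = ∞`). -/
def IsTimingMap {S : Type} (g : S → S) (τ : S → ℕ∞) : Prop :=
  (∀ s, (∀ w, g w ≠ s) → τ s = 0) ∧ ∀ s, τ (g s) = τ s + 1

/-!
The timing map is the depth `τ s = sup {n | s ∈ range g^[n]}`, the length of the longest
backward orbit from `s`. Since `g` is injective, `g s` has exactly one predecessor, namely `s`,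
so the backward orbits from `g s` of positive length are those from `s` extended by one step;
this gives `τ (g s) = τ s + 1`.
-/

open Function Set

namespace Function

variable {S : Type*}

noncomputable def depth (g : S → S) (s : S) : ℕ∞ :=
  ⨆ (n : ℕ) (_ : s ∈ range g^[n]), (n : ℕ∞)

theorem range_iterate_succ' (g : S → S) (n : ℕ) : range g^[n + 1] = g '' range g^[n] := by
  rw [iterate_succ', range_comp]

theorem depth_eq_zero_of_notMem_range {g : S → S} {s : S} (hs : s ∉ range g) :
    depth g s = 0 := by
  refine nonpos_iff_eq_zero.mp (iSup₂_le fun n hn => ?_)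
  cases n with
  | zero => rfl
  | succ n =>
    rw [range_iterate_succ'] at hn
    exact absurd (image_subset_range _ _ hn) hs

theorem Injective.depth_apply {g : S → S} (hg : Injective g) (s : S) :
    depth g (g s) = depth g s + 1 := by
  rw [depth, ← sup_iSup_nat_succ, depth, ENat.biSup_add' ⟨0, s, rfl⟩]
  simp only [range_iterate_succ', hg.mem_set_image, Nat.cast_succ]
  simp

end Function

/-- **Temporal dynamical systems are timed**: if the dynamical map `g` is injective, then the
dynamical system `(S, g)` admits a timing map. -/
theorem temporal_implies_timed {S : Type} (g : S → S) (hg : Function.Injective g) :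
    ∃ τ : S → ℕ∞, IsTimingMap g τ :=
  ⟨depth g, fun _ hs => depth_eq_zero_of_notMem_range fun ⟨w, hw⟩ => hs w hw,
    hg.depth_apply⟩
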